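/- For each of the 18 pairs (i,j) in the list (0,1),(0,2),(0,4),(1,0),(1,3),(1,5),(2,0),(2,5),(2,6),(3,1),(3,4),(4,0),(4,3),(4,6),(5,1),(5,2),(6,2),(6,4), the set [i,j] is a single conjugacy class of SL_3(𝔽_7): it is nonempty, closed under conjugation, and any two of its elements are conjugate in SL_3(𝔽_7). -/

import Mathlib

open Matrix Polynomial

abbrev SL3 := Matrix.SpecialLinearGroup (Fin 3) (ZMod 7)

/-- The set `[i,j]` of matrices in `SL₃(𝔽₇)` with characteristic polynomial
`X³ - i·X² + j·X - 1`. -/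
def classSet (i j : ZMod 7) : Set SL3 :=
  {M : SL3 | M.val.charpoly = X ^ 3 - C i * X ^ 2 + C j * X - 1}

/-- The 18 pairs `(i,j)`. -/
def pairs : List (ZMod 7 × ZMod 7) :=
  [(0,1),(0,2),(0,4),(1,0),(1,3),(1,5),(2,0),(2,5),(2,6),
   (3,1),(3,4),(4,0),(4,3),(4,6),(5,1),(5,2),(6,2),(6,4)]

/-!
If the characteristic polynomial `P` of `N ∈ Mₙ(F)` is irreducible, then `K = F[X]/(P)` acts on
`Fⁿ` through `X ↦ N`, and `x ↦ x • v` (for any `v ≠ 0`) is an `F`-linear isomorphism `K ≃ Fⁿ`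
carrying multiplication by `X` to `N`. Two matrices with the same irreducible characteristic
polynomial are therefore conjugate by some `g ∈ GLₙ(F)`. The image of `K` commutes with `N`, and the
determinant of the action of `x ∈ K` is its norm `N_{K/F}(x)`; over a finite field the norm is
surjective, so composing `g` with such an element makes its determinant `1`.
For the 18 pairs the cubic has no root in `𝔽₇`, hence is irreducible, and the companion matrix
lies in the class.
-/

namespace Matrix
variable {F : Type*} [Field F] {n : Type*} [Fintype n] [DecidableEq n]

section AdjoinRoot
variable {P : F[X]} {N : Matrix n n F} (h : aeval N P = 0)

noncomputable def liftAdjoinRoot : AdjoinRoot P →ₐ[F] Matrix n n F :=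
  Ideal.Quotient.liftₐ (Ideal.span {P}) (aeval N) fun q hq => by
    obtain ⟨r, rfl⟩ := Ideal.mem_span_singleton'.mp hq
    simp [h]

@[simp] lemma liftAdjoinRoot_mk (q : F[X]) : liftAdjoinRoot h (AdjoinRoot.mk P q) = aeval N q :=
  Ideal.Quotient.lift_mk _ _ _

@[simp] lemma liftAdjoinRoot_root : liftAdjoinRoot h (AdjoinRoot.root P) = N := by
  rw [← AdjoinRoot.mk_X, liftAdjoinRoot_mk, aeval_X]

noncomputable def orbitMap (v : n → F) : AdjoinRoot P →ₗ[F] n → F where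
  toFun x := liftAdjoinRoot h x *ᵥ v
  map_add' x y := by simp [add_mulVec]
  map_smul' c x := by simp [smul_mulVec]

lemma orbitMap_mul (v : n → F) (x y : AdjoinRoot P) :
    orbitMap h v (x * y) = liftAdjoinRoot h x *ᵥ orbitMap h v y := by
  simp [orbitMap, mulVec_mulVec]

variable [Fact (Irreducible P)]

lemma orbitMap_injective {v : n → F} (hv : v ≠ 0) : Function.Injective (orbitMap h v) := by
  refine (injective_iff_map_eq_zero _).mpr fun x hx => by_contra fun hx0 => hv ?_
  calc v = orbitMap h v (x⁻¹ * x) := by simp [inv_mul_cancel₀ hx0, orbitMap]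
    _ = 0 := by rw [orbitMap_mul, hx, mulVec_zero]

lemma finrank_adjoinRoot_of_charpoly_eq (hN : N.charpoly = P) :
    Module.finrank F (AdjoinRoot P) = Module.finrank F (n → F) := by
  have hP : P ≠ 0 := (Fact.out : Irreducible P).ne_zero
  rw [(AdjoinRoot.powerBasis hP).finrank, AdjoinRoot.powerBasis_dim, ← hN,
    charpoly_natDegree_eq_dim, Module.finrank_fintype_fun_eq_card]

noncomputable def orbitEquiv (hN : N.charpoly = P) {v : n → F} (hv : v ≠ 0) :
    AdjoinRoot P ≃ₗ[F] n → F :=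
  haveI := (AdjoinRoot.powerBasis (Fact.out : Irreducible P).ne_zero).finite
  (orbitMap (hN ▸ aeval_self_charpoly N) v).linearEquivOfInjective
    (orbitMap_injective _ hv) (finrank_adjoinRoot_of_charpoly_eq hN)

lemma orbitEquiv_mul (hN : N.charpoly = P) {v : n → F} (hv : v ≠ 0) (x y : AdjoinRoot P) :
    orbitEquiv hN hv (x * y) =
      liftAdjoinRoot (hN ▸ aeval_self_charpoly N) x *ᵥ orbitEquiv hN hv y :=
  orbitMap_mul _ v x y

lemma orbitEquiv_root_mul (hN : N.charpoly = P) {v : n → F} (hv : v ≠ 0) (y : AdjoinRoot P) :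
    orbitEquiv hN hv (AdjoinRoot.root P * y) = N *ᵥ orbitEquiv hN hv y := by
  rw [orbitEquiv_mul, liftAdjoinRoot_root]

lemma nonempty_of_irreducible_charpoly (hirr : Irreducible N.charpoly) : Nonempty n :=
  Fintype.card_pos_iff.mp (charpoly_natDegree_eq_dim N ▸ hirr.natDegree_pos)

lemma det_liftAdjoinRoot (hN : N.charpoly = P) (x : AdjoinRoot P) :
    (liftAdjoinRoot (hN ▸ aeval_self_charpoly N) x).det = Algebra.norm F x := by
  have := nonempty_of_irreducible_charpoly (hN ▸ (Fact.out : Irreducible P))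
  obtain ⟨v, hv⟩ := exists_ne (0 : n → F)
  set e := orbitEquiv hN hv
  have hconj : toLin' (liftAdjoinRoot (hN ▸ aeval_self_charpoly N) x) =
      (e : AdjoinRoot P →ₗ[F] n → F) ∘ₗ Algebra.lmul F (AdjoinRoot P) x ∘ₗ
        (e.symm : (n → F) →ₗ[F] AdjoinRoot P) := by
    refine LinearMap.ext fun w => ?_
    obtain ⟨y, rfl⟩ := e.surjective w
    simp [e, orbitEquiv_mul]
  rw [← LinearMap.det_toLin', hconj, LinearMap.det_conj, Algebra.norm_apply]

lemma commute_liftAdjoinRoot (hN : N.charpoly = P) (x : AdjoinRoot P) :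
    Commute (liftAdjoinRoot (hN ▸ aeval_self_charpoly N) x) N := by
  have := (Commute.all x (AdjoinRoot.root P)).map (liftAdjoinRoot (hN ▸ aeval_self_charpoly N))
  rwa [liftAdjoinRoot_root] at this

theorem exists_mul_eq_mul_of_charpoly_eq {M : Matrix n n F} (hM : M.charpoly = P)
    (hN : N.charpoly = P) : ∃ g : Matrix n n F, IsUnit g.det ∧ g * M = N * g := by
  have := nonempty_of_irreducible_charpoly (hN ▸ (Fact.out : Irreducible P))
  obtain ⟨v, hv⟩ := exists_ne (0 : n → F)
  set e := (orbitEquiv hM hv).symm.trans (orbitEquiv hN hv)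
  refine ⟨LinearMap.toMatrix' (e : (n → F) →ₗ[F] n → F), ?_, toLin'.injective ?_⟩
  · rw [LinearMap.det_toMatrix']
    exact LinearEquiv.isUnit_det' e
  · refine LinearMap.ext fun w => ?_
    obtain ⟨y, rfl⟩ := (orbitEquiv hM hv).surjective w
    simp [e, toLin'_mul, ← orbitEquiv_root_mul]

end AdjoinRoot

namespace SpecialLinearGroup

lemma charpoly_conj {R : Type*} [CommRing R] (g M : SpecialLinearGroup n R) :
    ((g * M * g⁻¹ : SpecialLinearGroup n R) : Matrix n n R).charpoly =
      (M : Matrix n n R).charpoly := by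
  rw [coe_mul, coe_mul, charpoly_mul_comm, ← Matrix.mul_assoc, ← coe_mul, inv_mul_cancel, coe_one,
    Matrix.one_mul]

theorem isConj_of_charpoly_eq [Finite F] {M N : SpecialLinearGroup n F}
    (hMN : (M : Matrix n n F).charpoly = (N : Matrix n n F).charpoly)
    (hirr : Irreducible (N : Matrix n n F).charpoly) : IsConj M N := by
  have := Fact.mk hirr
  have := (AdjoinRoot.powerBasis hirr.ne_zero).finite
  have : Finite (AdjoinRoot (N : Matrix n n F).charpoly) := Module.finite_of_finite F
  obtain ⟨g, hg, hgM⟩ := exists_mul_eq_mul_of_charpoly_eq hMN rfl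
  obtain ⟨x, hx⟩ :=
    FiniteField.norm_surjective F (AdjoinRoot (N : Matrix n n F).charpoly) g.det⁻¹
  set z := liftAdjoinRoot (aeval_self_charpoly (N : Matrix n n F)) x
  have hdet : (z * g).det = 1 := by
    rw [det_mul, det_liftAdjoinRoot rfl, hx, inv_mul_cancel₀ hg.ne_zero]
  refine isConj_iff.mpr ⟨⟨z * g, hdet⟩, mul_inv_eq_of_eq_mul (Subtype.ext ?_)⟩
  change z * g * M = N * (z * g)
  rw [Matrix.mul_assoc, hgM, ← Matrix.mul_assoc, (commute_liftAdjoinRoot rfl x).eq,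
    Matrix.mul_assoc]

end SpecialLinearGroup
end Matrix

section Cubic
variable {R : Type*} [CommRing R]

def cubicCompanion (a b c : R) : Matrix (Fin 3) (Fin 3) R := !![0, 0, c; 1, 0, -b; 0, 1, a]

lemma det_cubicCompanion (a b c : R) : (cubicCompanion a b c).det = c := by
  simp [cubicCompanion, det_fin_three]

lemma charpoly_cubicCompanion (a b c : R) :
    (cubicCompanion a b c).charpoly = X ^ 3 - C a * X ^ 2 + C b * X - C c := by
  rw [charpoly, det_fin_three]
  simp [cubicCompanion, Fin.ext_iff]
  ring

lemma irreducible_cubic_of_forall_ne_zero {K : Type*} [Field K] {a b c : K}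
    (h : ∀ x, x ^ 3 - a * x ^ 2 + b * x - c ≠ 0) :
    Irreducible (X ^ 3 - C a * X ^ 2 + C b * X - C c) := by
  refine irreducible_of_degree_le_three_of_not_isRoot ?_ fun x => by simpa using h x
  have : (X ^ 3 - C a * X ^ 2 + C b * X - C c).natDegree = 3 := by compute_degree!
  simp [this]

end Cubic

instance fact_prime_seven : Fact (Nat.Prime 7) := ⟨by norm_num⟩

lemma cubic_ne_zero_of_mem_pairs :
    ∀ p ∈ pairs, ∀ x : ZMod 7, x ^ 3 - p.1 * x ^ 2 + p.2 * x - 1 ≠ 0 := by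
  decide

theorem classSet_isConjClass :
    ∀ p ∈ pairs,
      (classSet p.1 p.2).Nonempty ∧
      (∀ M ∈ classSet p.1 p.2, ∀ g : SL3, g * M * g⁻¹ ∈ classSet p.1 p.2) ∧
      (∀ M ∈ classSet p.1 p.2, ∀ N ∈ classSet p.1 p.2, IsConj M N) := by
  rintro ⟨i, j⟩ hp
  have hirr : Irreducible (X ^ 3 - C i * X ^ 2 + C j * X - 1 : (ZMod 7)[X]) := by
    have hroots : ∀ x : ZMod 7, x ^ 3 - i * x ^ 2 + j * x - 1 ≠ 0 :=
      cubic_ne_zero_of_mem_pairs (i, j) hp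
    rw [← C_1]
    exact irreducible_cubic_of_forall_ne_zero hroots
  refine ⟨⟨⟨cubicCompanion i j 1, det_cubicCompanion i j 1⟩, ?_⟩, fun M hM g => ?_,
    fun M hM N hN => ?_⟩
  · exact (charpoly_cubicCompanion i j 1).trans (by rw [C_1])
  · exact (SpecialLinearGroup.charpoly_conj g M).trans hM
  · exact SpecialLinearGroup.isConj_of_charpoly_eq (hM.trans hN.symm) (hN ▸ hirr)
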